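/- Assume the symmetric matrix c is invertible, and set h₁ := (1/2) ∑_{i,j=1}^l (c^{-1})_{ij} u_i^{(0)} u_j^{(0)} ∈ π₀. Then the hamiltonian vector field of h₁ is the total derivative: ξ_{h₁} = ∂ as derivations of π₀. -/

import Mathlib

open MvPolynomial

noncomputable section

/-- The algebra of differential polynomials in the variables `u_i^{(n)}`, `1 ≤ i ≤ l`, `n ≥ 0`. -/
abbrev Pi0 (l : ℕ) : Type := MvPolynomial (Fin l × ℕ) ℂ

/-- The variable `u_i^{(n)}`. -/
def u {l : ℕ} (i : Fin l) (n : ℕ) : Pi0 l := X (i, n)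

/-- The derivation `∂` with `∂ u_i^{(n)} = u_i^{(n+1)}`. -/
def pa (l : ℕ) : Derivation ℂ (Pi0 l) (Pi0 l) :=
  mkDerivation ℂ (fun p => X (p.1, p.2 + 1))

variable {l : ℕ}

/-- The variational derivative `δ_i P := ∑_{j=1}^l c_{ij} ∑_{n ≥ 0} (-∂)^n (∂P/∂u_j^{(n)})`
associated to a symmetric matrix `c` of complex numbers. -/
def vard (c : Matrix (Fin l) (Fin l) ℂ) (i : Fin l) (P : Pi0 l) : Pi0 l :=
  ∑ j : Fin l, c i j • ∑ᶠ n : ℕ, ((-(pa l).toLinearMap) ^ n) (pderiv (j, n) P)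

/-- The hamiltonian vector field `ξ_P`: the unique `ℂ`-derivation of `π₀` with
`ξ_P u_i^{(n)} = ∂^{n+1}(δ_i P)`. -/
def xic (c : Matrix (Fin l) (Fin l) ℂ) (P : Pi0 l) : Derivation ℂ (Pi0 l) (Pi0 l) :=
  mkDerivation ℂ (fun p => ((pa l).toLinearMap ^ (p.2 + 1)) (vard c p.1 P))

/-! Since `h₁` involves only the variables `u^{(0)}`, the sum over `n` in `δ_i h₁` reduces to
`n = 0`, and `δ_i h₁ = ∑_j c_{ij} ∂h₁/∂u_j^{(0)} = (c c⁻¹ u^{(0)})_i = u_i^{(0)}`. Hence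
`ξ_{h₁} u_i^{(n)} = ∂^{n+1} u_i^{(0)} = u_i^{(n+1)} = ∂ u_i^{(n)}`, and two derivations agreeing on
the generators coincide. -/

def quadHam (A : Matrix (Fin l) (Fin l) ℂ) : Pi0 l :=
  (1/2 : ℂ) • ∑ i : Fin l, ∑ j : Fin l, A i j • (u i 0 * u j 0)

lemma pa_X (p : Fin l × ℕ) : pa l (X p) = X (p.1, p.2 + 1) :=
  mkDerivation_X ℂ _ p

lemma pa_pow_X (i : Fin l) (n k : ℕ) :
    ((pa l).toLinearMap ^ k) (X (i, n) : Pi0 l) = X (i, n + k) := by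
  induction k with
  | zero => simp
  | succ k ih => rw [pow_succ', Module.End.mul_apply, ih]; exact pa_X (i, n + k)

lemma pderiv_u_zero (i j : Fin l) :
    pderiv (j, 0) (u i 0 : Pi0 l) = if i = j then 1 else 0 := by
  by_cases h : i = j
  · simp [u, h]
  · simp [u, h, pderiv_X_of_ne (show (i, 0) ≠ (j, 0) by simpa using h)]

lemma pderiv_u_zero_of_ne_zero (i j : Fin l) {n : ℕ} (hn : n ≠ 0) :
    pderiv (j, n) (u i 0 : Pi0 l) = 0 :=
  pderiv_X_of_ne (by simp [Ne.symm hn])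

lemma pderiv_quadHam_of_ne_zero (A : Matrix (Fin l) (Fin l) ℂ) (j : Fin l) {n : ℕ} (hn : n ≠ 0) :
    pderiv (j, n) (quadHam A) = 0 := by
  simp [quadHam, pderiv_u_zero_of_ne_zero _ _ hn]

lemma pderiv_quadHam_zero {A : Matrix (Fin l) (Fin l) ℂ} (hA : A.IsSymm) (j : Fin l) :
    pderiv (j, 0) (quadHam A) = ∑ k : Fin l, A j k • u k 0 := by
  have hAj : ∀ k, A k j = A j k := hA.apply j
  simp only [quadHam, one_div, Derivation.map_smul, map_sum, Derivation.leibniz, pderiv_u_zero,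
    smul_eq_mul, mul_ite, mul_one, mul_zero, smul_add, smul_ite, smul_zero, Finset.sum_add_distrib,
    Finset.sum_ite_eq', Finset.mem_univ, if_true, hAj, Finset.sum_ite_irrel, Finset.sum_const_zero]
  rw [← add_smul]
  norm_num

lemma vard_of_pderiv_eq_zero (c : Matrix (Fin l) (Fin l) ℂ) (i : Fin l) {P : Pi0 l}
    (hP : ∀ j : Fin l, ∀ n ≠ 0, pderiv (j, n) P = 0) :
    vard c i P = ∑ j : Fin l, c i j • pderiv (j, 0) P := by
  unfold vard
  congr! 2 with j
  rw [finsum_eq_single _ 0 fun n hn => by rw [hP j n hn, map_zero]]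
  rfl

lemma vard_quadHam (c : Matrix (Fin l) (Fin l) ℂ) {A : Matrix (Fin l) (Fin l) ℂ} (hA : A.IsSymm)
    (i : Fin l) : vard c i (quadHam A) = ∑ k : Fin l, (c * A) i k • u k 0 := by
  rw [vard_of_pderiv_eq_zero c i fun j _ hn => pderiv_quadHam_of_ne_zero A j hn]
  simp only [pderiv_quadHam_zero hA, Finset.smul_sum, smul_smul, Matrix.mul_apply,
    Finset.sum_smul]
  exact Finset.sum_comm

lemma xic_eq_pa_of_vard_eq_u (c : Matrix (Fin l) (Fin l) ℂ) {P : Pi0 l}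
    (hP : ∀ i, vard c i P = u i 0) : xic c P = pa l := by
  refine derivation_ext fun p => ?_
  rw [xic, mkDerivation_X, hP, u, pa_pow_X, pa_X, zero_add]

theorem hamiltonian_vf_of_h1_is_pa_general (l : ℕ)
    (c : Matrix (Fin l) (Fin l) ℂ) (hc : c.IsSymm) (hdet : IsUnit c.det) :
    xic c ((1/2 : ℂ) • ∑ i : Fin l, ∑ j : Fin l, c⁻¹ i j • (u i 0 * u j 0)) = pa l := by
  have hsymm : c⁻¹.IsSymm := by
    rw [Matrix.IsSymm, Matrix.transpose_nonsing_inv, hc.eq]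
  refine xic_eq_pa_of_vard_eq_u c fun i => ?_
  rw [← quadHam, vard_quadHam c hsymm, Matrix.mul_nonsing_inv c hdet]
  simp [Matrix.one_apply]

/-- if `c` is invertible and `h₁ = (1/2) ∑_{i,j} (c⁻¹)_{ij} u_i^{(0)} u_j^{(0)}`,
then `ξ_{h₁} = ∂` as derivations of `π₀`. -/
theorem hamiltonian_vf_of_h1_is_pa (l : ℕ) (hl : 1 ≤ l)
    (c : Matrix (Fin l) (Fin l) ℂ) (hc : c.IsSymm) (hdet : IsUnit c.det) :
    xic c ((1/2 : ℂ) • ∑ i : Fin l, ∑ j : Fin l, c⁻¹ i j • (u i 0 * u j 0)) = pa l :=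
  hamiltonian_vf_of_h1_is_pa_general l c hc hdet
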